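/- Let λ be a k-shape and let r₁ > r₂ be two contiguously connected rows of λ (each containing an addable corner at diagonal distance k or k+1). If s₁ is a row of λ with an addable corner and s₁ > r₁, then the k-connected row s₂ below s₁ satisfies s₂ > r₂. -/

import Mathlib

open Classical

structure KSPartition where
  parts : ℕ → ℕ
  antitone' : ∀ i j : ℕ, i ≤ j → parts j ≤ parts i
  finite' : ∃ N : ℕ, ∀ i : ℕ, N ≤ i → parts i = 0

namespace KSPartition

def empty : KSPartition :=
  ⟨fun _ => 0, fun _ _ _ => le_rfl, ⟨0, fun _ _ => rfl⟩⟩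

def Mem (lam : KSPartition) (b : ℕ × ℕ) : Prop := b.2 < lam.parts b.1

def Le (lam mu : KSPartition) : Prop := ∀ i : ℕ, lam.parts i ≤ mu.parts i

noncomputable def conj (lam : KSPartition) (j : ℕ) : ℕ :=
  @Nat.find (fun i => lam.parts i ≤ j) (Classical.decPred _)
    (by
      obtain ⟨N, hN⟩ := lam.finite'
      exact ⟨N, show lam.parts N ≤ j by rw [hN N le_rfl]; exact Nat.zero_le j⟩)

noncomputable def hook (lam : KSPartition) (i j : ℕ) : ℕ :=
  (lam.parts i - j) + (lam.conj j - i) - 1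

noncomputable def rsk (k : ℕ) (lam : KSPartition) (i : ℕ) : ℕ :=
  Nat.card {j : ℕ | lam.Mem (i, j) ∧ lam.hook i j ≤ k}

noncomputable def csk (k : ℕ) (lam : KSPartition) (j : ℕ) : ℕ :=
  Nat.card {i : ℕ | lam.Mem (i, j) ∧ lam.hook i j ≤ k}

def IsKShape (k : ℕ) (lam : KSPartition) : Prop :=
  (∀ i i' : ℕ, i ≤ i' → rsk k lam i' ≤ rsk k lam i) ∧
  (∀ j j' : ℕ, j ≤ j' → csk k lam j' ≤ csk k lam j)

def IsCore (p : ℕ) (lam : KSPartition) : Prop :=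
  ∀ i j : ℕ, lam.Mem (i, j) → lam.hook i j ≠ p

noncomputable def psize (lam : KSPartition) : ℕ := Nat.card {b : ℕ × ℕ | lam.Mem b}

noncomputable def intSize (k : ℕ) (lam : KSPartition) : ℕ :=
  Nat.card {b : ℕ × ℕ | lam.Mem b ∧ k < lam.hook b.1 b.2}

noncomputable def bdrySize (k : ℕ) (lam : KSPartition) : ℕ :=
  Nat.card {b : ℕ × ℕ | lam.Mem b ∧ lam.hook b.1 b.2 ≤ k}

noncomputable def union (lam mu : KSPartition) : KSPartition :=
  ⟨fun i => max (lam.parts i) (mu.parts i),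
   fun i j h => max_le_max (lam.antitone' i j h) (mu.antitone' i j h),
   by
     obtain ⟨N, hN⟩ := lam.finite'
     obtain ⟨M, hM⟩ := mu.finite'
     refine ⟨max N M, fun i hi => ?_⟩
     show max (lam.parts i) (mu.parts i) = 0
     rw [hN i (le_trans (le_max_left _ _) hi), hM i (le_trans (le_max_right _ _) hi)]
     simp⟩

end KSPartition

open KSPartition

def diagIdx (b : ℕ × ℕ) : ℤ := (b.2 : ℤ) - (b.1 : ℤ)

def cellDist (b b' : ℕ × ℕ) : ℕ := (diagIdx b - diagIdx b').natAbs

def Contiguous (k : ℕ) (b b' : ℕ × ℕ) : Prop :=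
  cellDist b b' = k ∨ cellDist b b' = k + 1

def HasAddable (lam : KSPartition) (i : ℕ) : Prop :=
  i = 0 ∨ lam.parts i < lam.parts (i - 1)

def addCorner (lam : KSPartition) (i : ℕ) : ℕ × ℕ := (i, lam.parts i)

def IsAddableCell (lam : KSPartition) (b : ℕ × ℕ) : Prop :=
  HasAddable lam b.1 ∧ b.2 = lam.parts b.1

def HasRemovable (lam : KSPartition) (i : ℕ) : Prop := lam.parts (i + 1) < lam.parts i

def remCorner (lam : KSPartition) (i : ℕ) : ℕ × ℕ := (i, lam.parts i - 1)

def KConnectedBelow (k : ℕ) (lam : KSPartition) (r r' : ℕ) : Prop :=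
  r' < r ∧ HasAddable lam r ∧ HasAddable lam r' ∧
    cellDist (addCorner lam r) (addCorner lam r') ≤ k + 1 ∧
    ∀ r'' : ℕ, r'' < r' → HasAddable lam r'' →
      ¬ cellDist (addCorner lam r) (addCorner lam r'') ≤ k + 1

def ContigConnected (k : ℕ) (lam : KSPartition) (r r' : ℕ) : Prop :=
  KConnectedBelow k lam r r' ∧ Contiguous k (addCorner lam r) (addCorner lam r')

inductive InChain (k : ℕ) (lam : KSPartition) (r : ℕ) : ℕ → Prop
  | refl : InChain k lam r r
  | step {s s' : ℕ} : InChain k lam r s → KConnectedBelow k lam s s' → InChain k lam r s'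

noncomputable def iCC (k : ℕ) (lam : KSPartition) (top bot : ℕ) (ct cb : Bool) : ℕ :=
  Nat.card {s : ℕ | InChain k lam top s ∧ (if cb then bot ≤ s else bot < s) ∧
    (ct = true ∨ s ≠ top)}

noncomputable def rowUp (lam mu : KSPartition) : ℕ := sSup {i : ℕ | lam.parts i < mu.parts i}

noncomputable def rowDown (lam mu : KSPartition) : ℕ := sInf {i : ℕ | lam.parts i < mu.parts i}

noncomputable def chargeStepVal (k : ℕ) (sh : KSPartition) (r r' : ℕ) : ℤ :=
  if r' ≤ r then (iCC k sh r r' true false : ℤ) else -(iCC k sh r' r false true : ℤ)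

noncomputable def cochargeStepVal (k : ℕ) (sh : KSPartition) (r r' : ℕ) : ℤ :=
  if r' < r then -(iCC k sh r r' false false : ℤ) else (iCC k sh r' r true true : ℤ)

noncomputable def chargeLet (k : ℕ) (T : ℕ → KSPartition) : ℕ → ℤ
  | 0 => 0
  | 1 => 0
  | n + 2 =>
    chargeLet k T (n + 1) +
      chargeStepVal k (T (n + 1)) (rowUp (T n) (T (n + 1)) + 1)
        (rowUp (T (n + 1)) (T (n + 2)))

noncomputable def cochargeLet (k : ℕ) (T : ℕ → KSPartition) : ℕ → ℤ
  | 0 => 0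
  | 1 => 0
  | n + 2 =>
    cochargeLet k T (n + 1) +
      cochargeStepVal k (T (n + 1)) (rowDown (T n) (T (n + 1)) + 1)
        (rowDown (T (n + 1)) (T (n + 2)))

noncomputable def chargeTab (k : ℕ) (T : ℕ → KSPartition) (N : ℕ) : ℤ :=
  ∑ n ∈ Finset.range N, chargeLet k T (n + 1)

noncomputable def cochargeTab (k : ℕ) (T : ℕ → KSPartition) (N : ℕ) : ℤ :=
  ∑ n ∈ Finset.range N, cochargeLet k T (n + 1)

def skewSet (lam mu : KSPartition) : Set (ℕ × ℕ) := {b | mu.Mem b ∧ ¬ lam.Mem b}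

def IsStringOf (k : ℕ) (lam mu : KSPartition) (ℓ : ℕ) (a : ℕ → ℕ × ℕ) : Prop :=
  KSPartition.Le lam mu ∧
  (∀ b : ℕ × ℕ, b ∈ skewSet lam mu ↔ ∃ i < ℓ, a i = b) ∧
  (∀ i j : ℕ, i < ℓ → j < ℓ → a i = a j → i = j) ∧
  (∀ i : ℕ, i + 1 < ℓ → (a (i + 1)).1 < (a i).1 ∧ Contiguous k (a i) (a (i + 1)))

def IsRowTypeStringOf (k : ℕ) (lam mu : KSPartition) (ℓ : ℕ) (a : ℕ → ℕ × ℕ) : Prop :=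
  IsStringOf k lam mu ℓ a ∧ ∀ i : ℕ, rsk k mu i = rsk k lam i

def IsColTypeStringOf (k : ℕ) (lam mu : KSPartition) (ℓ : ℕ) (a : ℕ → ℕ × ℕ) : Prop :=
  IsStringOf k lam mu ℓ a ∧ ∀ j : ℕ, csk k mu j = csk k lam j

def TranslateBy (v : ℤ × ℤ) (b b' : ℕ × ℕ) : Prop :=
  (b'.1 : ℤ) = (b.1 : ℤ) + v.1 ∧ (b'.2 : ℤ) = (b.2 : ℤ) + v.2

def IsRowMove (k ℓ r : ℕ) (lam mu : KSPartition) : Prop :=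
  1 ≤ r ∧ 1 ≤ ℓ ∧ IsKShape k lam ∧ IsKShape k mu ∧
  ∃ (c : ℕ → KSPartition) (a : ℕ → ℕ → ℕ × ℕ),
    c 0 = lam ∧ c r = mu ∧
    (∀ i < r, IsRowTypeStringOf k (c i) (c (i + 1)) ℓ (a i)) ∧
    (∀ i < r, ∃ v : ℤ × ℤ, ∀ t < ℓ, TranslateBy v (a 0 t) (a i t)) ∧
    (∀ i : ℕ, i + 1 < r → (a (i + 1) 0).2 = (a i 0).2 + 1)

def IsColMove (k ℓ r : ℕ) (lam mu : KSPartition) : Prop :=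
  1 ≤ r ∧ 1 ≤ ℓ ∧ IsKShape k lam ∧ IsKShape k mu ∧
  ∃ (c : ℕ → KSPartition) (a : ℕ → ℕ → ℕ × ℕ),
    c 0 = lam ∧ c r = mu ∧
    (∀ i < r, IsColTypeStringOf k (c i) (c (i + 1)) ℓ (a i)) ∧
    (∀ i < r, ∃ v : ℤ × ℤ, ∀ t < ℓ, TranslateBy v (a 0 t) (a i t)) ∧
    (∀ i : ℕ, i + 1 < r → (a (i + 1) (ℓ - 1)).1 = (a i (ℓ - 1)).1 + 1)

def IsMoveOf (k ℓ r : ℕ) (isRow : Bool) (lam mu : KSPartition) : Prop :=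
  if isRow then IsRowMove k ℓ r lam mu else IsColMove k ℓ r lam mu

def MoveRel (k : ℕ) (lam mu : KSPartition) : Prop :=
  ∃ ℓ r : ℕ, IsRowMove k ℓ r lam mu ∨ IsColMove k ℓ r lam mu

def IsCover (k : ℕ) (lam mu : KSPartition) : Prop :=
  IsKShape k lam ∧ IsKShape k mu ∧
  ∃ (ℓ : ℕ) (a : ℕ → ℕ × ℕ), 1 ≤ ℓ ∧ IsStringOf k lam mu ℓ a ∧
    (∃ i : ℕ, rsk k lam i < rsk k mu i) ∧ (∃ j : ℕ, csk k lam j < csk k mu j)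

noncomputable def topCellC (lam mu : KSPartition) : ℕ × ℕ :=
  (rowUp lam mu, lam.parts (rowUp lam mu))

noncomputable def botCellC (lam mu : KSPartition) : ℕ × ℕ :=
  (rowDown lam mu, lam.parts (rowDown lam mu))

def CanContinueBelow (k : ℕ) (lam mu : KSPartition) : Prop :=
  ∃ i : ℕ, HasAddable lam i ∧ i < rowDown lam mu ∧
    Contiguous k (botCellC lam mu) (addCorner lam i)

def CanContinueAbove (k : ℕ) (lam mu : KSPartition) : Prop :=
  ∃ i : ℕ, HasAddable lam i ∧ rowUp lam mu < i ∧
    Contiguous k (addCorner lam i) (topCellC lam mu)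

def RevContinueBelow (k : ℕ) (lam mu : KSPartition) : Prop :=
  ∃ i : ℕ, HasRemovable mu i ∧ i < rowDown lam mu ∧
    Contiguous k (botCellC lam mu) (remCorner mu i)

def RevContinueAbove (k : ℕ) (lam mu : KSPartition) : Prop :=
  ∃ i : ℕ, HasRemovable mu i ∧ rowUp lam mu < i ∧
    Contiguous k (remCorner mu i) (topCellC lam mu)

def IsMaximalCover (k : ℕ) (lam mu : KSPartition) : Prop :=
  IsCover k lam mu ∧ ¬ CanContinueAbove k lam mu ∧ ¬ CanContinueBelow k lam mu

def IsReverseMaximalCover (k : ℕ) (lam mu : KSPartition) : Prop :=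
  IsCover k lam mu ∧ ¬ RevContinueAbove k lam mu ∧ ¬ RevContinueBelow k lam mu

def StdKShapeTableau (k N : ℕ) (T : ℕ → KSPartition) : Prop :=
  T 0 = KSPartition.empty ∧ ∀ n < N, IsCover k (T n) (T (n + 1))

def HorizStrip (lam mu : KSPartition) : Prop :=
  KSPartition.Le lam mu ∧ ∀ j : ℕ, mu.conj j ≤ lam.conj j + 1

def VertStrip (lam mu : KSPartition) : Prop :=
  KSPartition.Le lam mu ∧ ∀ i : ℕ, mu.parts i ≤ lam.parts i + 1

def IsStdKTableau (k N : ℕ) (T : ℕ → KSPartition) : Prop :=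
  T 0 = KSPartition.empty ∧ (∀ n ≤ N, IsCore (k + 1) (T n)) ∧
  ∀ n < N, HorizStrip (T n) (T (n + 1)) ∧ VertStrip (T n) (T (n + 1)) ∧
    bdrySize k (T (n + 1)) = bdrySize k (T n) + 1

def cellResidue (k : ℕ) (b : ℕ × ℕ) : ZMod (k + 1) :=
  (b.2 : ZMod (k + 1)) - (b.1 : ZMod (k + 1))

def GroundPos (lam : KSPartition) (i j : ℕ) : Prop :=
  1 ≤ i ∧ lam.parts i ≤ j ∧ j < lam.parts (i - 1)

noncomputable def diagCount (k : ℕ) (e : ZMod (k + 1)) (b b' : ℕ × ℕ) : ℕ :=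
  Nat.card {d : ℤ | min (diagIdx b) (diagIdx b') < d ∧
    d < max (diagIdx b) (diagIdx b') ∧ (d : ZMod (k + 1)) = e}

noncomputable def upCell (lam mu : KSPartition) : ℕ × ℕ :=
  (rowUp lam mu, lam.parts (rowUp lam mu))

def shiftU (S : Set (ℕ × ℕ)) : Set (ℕ × ℕ) := (fun b => (b.1 + 1, b.2)) '' S
/-! The diagonal index of the addable corner of row `i` is antitone in `i`, and it drops by at
least 2 when passing to a row that itself has an addable corner. If `s₂ ≤ r₂`, the corner of `s₂`
therefore lies on a diagonal at least that of `r₂`, while the corner of `s₁` lies at least two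
diagonals beyond that of `r₁`; contiguity of `r₁, r₂` then puts the corners of `s₁, s₂` at
distance at least `k + 2`, contradicting `k`-connectedness. -/

namespace KSPartition

variable (lam : KSPartition)

theorem diagIdx_addCorner_le_of_le {i j : ℕ} (hij : i ≤ j) :
    diagIdx (addCorner lam j) ≤ diagIdx (addCorner lam i) := by
  have := lam.antitone' i j hij
  simp only [diagIdx, addCorner]
  omega

theorem diagIdx_addCorner_add_two_le {i j : ℕ} (hij : i < j) (hj : HasAddable lam j) :
    diagIdx (addCorner lam j) + 2 ≤ diagIdx (addCorner lam i) := by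
  have hcorner : lam.parts j < lam.parts (j - 1) := hj.resolve_left (by omega)
  have := lam.antitone' i (j - 1) (by omega)
  simp only [diagIdx, addCorner]
  omega

theorem cellDist_addCorner_of_le {i j : ℕ} (hij : i ≤ j) :
    (cellDist (addCorner lam j) (addCorner lam i) : ℤ) =
      diagIdx (addCorner lam i) - diagIdx (addCorner lam j) := by
  have := lam.diagIdx_addCorner_le_of_le hij
  simp only [cellDist]
  omega

end KSPartition

theorem KConnectedBelow.diagIdx_sub_le {k : ℕ} {lam : KSPartition} {r r' : ℕ}
    (h : KConnectedBelow k lam r r') :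
    diagIdx (addCorner lam r') - diagIdx (addCorner lam r) ≤ k + 1 := by
  rw [← lam.cellDist_addCorner_of_le h.1.le]
  exact_mod_cast h.2.2.2.1

theorem ContigConnected.le_diagIdx_sub {k : ℕ} {lam : KSPartition} {r r' : ℕ}
    (h : ContigConnected k lam r r') :
    k ≤ diagIdx (addCorner lam r') - diagIdx (addCorner lam r) := by
  rw [← lam.cellDist_addCorner_of_le h.1.1.le]
  rcases h.2 with hd | hd <;> omega

theorem connected_row_above_general (k : ℕ) (lam : KSPartition)
    (r₁ r₂ : ℕ) (h12 : ContigConnected k lam r₁ r₂)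
    (s₁ s₂ : ℕ) (hs : r₁ < s₁) (hconn : KConnectedBelow k lam s₁ s₂) :
    r₂ < s₂ := by
  by_contra! hs₂
  have hr := h12.le_diagIdx_sub
  have hs₁ := lam.diagIdx_addCorner_add_two_le hs hconn.2.1
  have hs₂ := lam.diagIdx_addCorner_le_of_le hs₂
  have := hconn.diagIdx_sub_le
  omega

/-- rows above contiguously connected rows connect above. -/
theorem connected_row_above (k : ℕ) (hk : 2 ≤ k) (lam : KSPartition)
    (hsh : IsKShape k lam) (r₁ r₂ : ℕ) (h12 : ContigConnected k lam r₁ r₂)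
    (s₁ s₂ : ℕ) (hs : r₁ < s₁) (hconn : KConnectedBelow k lam s₁ s₂) :
    r₂ < s₂ :=
  connected_row_above_general k lam r₁ r₂ h12 s₁ s₂ hs hconn
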